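/- arXiv:1709.05423 — 2 statements merged into one kernel-verified Lean document; each statement's English description precedes it below -/
import Mathlib

section
/- The ideal I = ⟨x₂₁x₄₂ − x₄₁, x₂₁x₃₂, x₃₂x₄₃⟩ in the polynomial ring ℂ[x₂₁, x₃₁, x₃₂, x₄₁, x₄₂, x₄₃] is a radical ideal, and it equals the intersection of the two prime ideals I₁ = ⟨x₃₂, x₂₁x₄₂ − x₄₁⟩ and I₂ = ⟨x₄₃, x₄₁, x₂₁⟩. -/
open MvPolynomial

/- Variables: `X 0 = x₂₁`, `X 1 = x₃₁`, `X 2 = x₃₂`, `X 3 = x₄₁`,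
`X 4 = x₄₂`, `X 5 = x₄₃` in `ℂ[x₂₁, x₃₁, x₃₂, x₄₁, x₄₂, x₄₃]`. -/


lemma sub_aeval_mem {σ R : Type*} [CommRing R] (f : σ → MvPolynomial σ R)
    (I : Ideal (MvPolynomial σ R)) (h : ∀ i, X i - f i ∈ I) (p : MvPolynomial σ R) :
    p - aeval f p ∈ I := by
  induction p using MvPolynomial.induction_on with
  | C a => simp
  | add p q hp hq =>
      have : p + q - aeval f (p + q) = (p - aeval f p) + (q - aeval f q) := by
        rw [map_add]; ring
      rw [this]; exact I.add_mem hp hq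
  | mul_X p i hp =>
      have : p * X i - aeval f (p * X i) =
          (p - aeval f p) * X i + aeval f p * (X i - f i) := by
        rw [map_mul, aeval_X]; ring
      rw [this]
      exact I.add_mem (I.mul_mem_right _ hp) (I.mul_mem_left _ (h i))

lemma span_eq_ker {σ R : Type*} [CommRing R] (f : σ → MvPolynomial σ R)
    (S : Set (MvPolynomial σ R)) (h1 : ∀ s ∈ S, aeval f s = 0)
    (h2 : ∀ i, X i - f i ∈ Ideal.span S) :
    Ideal.span S = RingHom.ker (aeval f : MvPolynomial σ R →ₐ[R] MvPolynomial σ R) := by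
  apply le_antisymm
  · rw [Ideal.span_le]
    intro s hs
    exact h1 s hs
  · intro p hp
    rw [RingHom.mem_ker] at hp
    have := sub_aeval_mem f _ h2 p
    rwa [show (aeval f : MvPolynomial σ R →ₐ[R] MvPolynomial σ R) p = aeval f p from rfl,
      hp, sub_zero] at this

noncomputable def sub1 : Fin 6 → MvPolynomial (Fin 6) ℂ
  | 0 => X 0
  | 1 => X 1
  | 2 => 0
  | 3 => X 0 * X 4
  | 4 => X 4
  | 5 => X 5

noncomputable def sub2 : Fin 6 → MvPolynomial (Fin 6) ℂ
  | 0 => 0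
  | 1 => X 1
  | 2 => X 2
  | 3 => 0
  | 4 => X 4
  | 5 => 0

lemma span1_eq : (Ideal.span {X 2, X 0 * X 4 - X 3} : Ideal (MvPolynomial (Fin 6) ℂ)) =
    RingHom.ker (aeval sub1 : MvPolynomial (Fin 6) ℂ →ₐ[ℂ] MvPolynomial (Fin 6) ℂ) := by
  apply span_eq_ker
  · rintro s (rfl | rfl) <;> simp [sub1]
  · intro i
    fin_cases i <;> simp [sub1]
    · exact Ideal.subset_span (Or.inl rfl)
    · have : (X 3 : MvPolynomial (Fin 6) ℂ) - X 0 * X 4 = -(X 0 * X 4 - X 3) := by ring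
      rw [this]
      exact neg_mem (Ideal.subset_span (Or.inr rfl))

lemma span2_eq : (Ideal.span {X 5, X 3, X 0} : Ideal (MvPolynomial (Fin 6) ℂ)) =
    RingHom.ker (aeval sub2 : MvPolynomial (Fin 6) ℂ →ₐ[ℂ] MvPolynomial (Fin 6) ℂ) := by
  apply span_eq_ker
  · rintro s (rfl | rfl | rfl) <;> simp [sub2]
  · intro i
    fin_cases i <;> simp [sub2]
    · exact Ideal.subset_span (Or.inr (Or.inr rfl))
    · exact Ideal.subset_span (Or.inr (Or.inl rfl))
    · exact Ideal.subset_span (Or.inl rfl)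

/-- The ideal `⟨x₂₁x₄₂ − x₄₁, x₂₁x₃₂, x₃₂x₄₃⟩` is radical and equals the
intersection of the two prime ideals `⟨x₃₂, x₂₁x₄₂ − x₄₁⟩` and `⟨x₄₃, x₄₁, x₂₁⟩`. -/
theorem stmt16 :
    (Ideal.span {X 0 * X 4 - X 3, X 0 * X 2, X 2 * X 5} :
        Ideal (MvPolynomial (Fin 6) ℂ)).IsRadical ∧
    (Ideal.span {X 2, X 0 * X 4 - X 3} :
        Ideal (MvPolynomial (Fin 6) ℂ)).IsPrime ∧
    (Ideal.span {X 5, X 3, X 0} : Ideal (MvPolynomial (Fin 6) ℂ)).IsPrime ∧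
    (Ideal.span {X 0 * X 4 - X 3, X 0 * X 2, X 2 * X 5} :
        Ideal (MvPolynomial (Fin 6) ℂ)) =
      Ideal.span {X 2, X 0 * X 4 - X 3} ⊓ Ideal.span {X 5, X 3, X 0} := by
  set I : Ideal (MvPolynomial (Fin 6) ℂ) :=
    Ideal.span {X 0 * X 4 - X 3, X 0 * X 2, X 2 * X 5} with hI
  set I1 : Ideal (MvPolynomial (Fin 6) ℂ) := Ideal.span {X 2, X 0 * X 4 - X 3} with hI1
  set I2 : Ideal (MvPolynomial (Fin 6) ℂ) := Ideal.span {X 5, X 3, X 0} with hI2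
  have hP1 : I1.IsPrime := by rw [hI1, span1_eq]; exact RingHom.ker_isPrime _
  have hP2 : I2.IsPrime := by rw [hI2, span2_eq]; exact RingHom.ker_isPrime _
  -- generator memberships
  have hX2 : (X 2 : MvPolynomial (Fin 6) ℂ) ∈ I1 := Ideal.subset_span (Or.inl rfl)
  have hg1 : (X 0 * X 4 - X 3 : MvPolynomial (Fin 6) ℂ) ∈ I1 :=
    Ideal.subset_span (Or.inr rfl)
  have hX5 : (X 5 : MvPolynomial (Fin 6) ℂ) ∈ I2 := Ideal.subset_span (Or.inl rfl)
  have hX3 : (X 3 : MvPolynomial (Fin 6) ℂ) ∈ I2 := Ideal.subset_span (Or.inr (Or.inl rfl))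
  have hX0 : (X 0 : MvPolynomial (Fin 6) ℂ) ∈ I2 := Ideal.subset_span (Or.inr (Or.inr rfl))
  have hIg1 : (X 0 * X 4 - X 3 : MvPolynomial (Fin 6) ℂ) ∈ I :=
    Ideal.subset_span (Or.inl rfl)
  have hIg2 : (X 0 * X 2 : MvPolynomial (Fin 6) ℂ) ∈ I :=
    Ideal.subset_span (Or.inr (Or.inl rfl))
  have hIg3 : (X 2 * X 5 : MvPolynomial (Fin 6) ℂ) ∈ I :=
    Ideal.subset_span (Or.inr (Or.inr rfl))
  have hX3X2 : (X 3 * X 2 : MvPolynomial (Fin 6) ℂ) ∈ I := by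
    have h : (X 3 * X 2 : MvPolynomial (Fin 6) ℂ) =
        (X 0 * X 4 - X 3) * (-X 2) + (X 0 * X 2) * X 4 := by ring
    rw [h]
    exact I.add_mem (I.mul_mem_right _ hIg1) (I.mul_mem_right _ hIg2)
  have heq : I = I1 ⊓ I2 := by
    apply le_antisymm
    · rw [hI, Ideal.span_le]
      rintro s (rfl | rfl | rfl) <;> rw [SetLike.mem_coe, Ideal.mem_inf] <;> constructor
      · exact hg1
      · exact I2.sub_mem (I2.mul_mem_right _ hX0) hX3
      · exact I1.mul_mem_left _ hX2
      · exact I2.mul_mem_right _ hX0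
      · exact I1.mul_mem_right _ hX2
      · exact I2.mul_mem_left _ hX5
    · intro p hp
      rw [Ideal.mem_inf] at hp
      obtain ⟨hp1, hp2⟩ := hp
      rw [hI1, Ideal.mem_span_pair] at hp1
      obtain ⟨a, b, hab⟩ := hp1
      have hb2 : b * (X 0 * X 4 - X 3) ∈ I2 :=
        I2.mul_mem_left _ (I2.sub_mem (I2.mul_mem_right _ hX0) hX3)
      have ha2 : a * X 2 ∈ I2 := by
        have h : a * X 2 = p - b * (X 0 * X 4 - X 3) := by rw [← hab]; ring
        rw [h]
        exact I2.sub_mem hp2 hb2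
      have ha : a ∈ I2 := by
        rw [hI2, span2_eq] at ha2 ⊢
        rw [RingHom.mem_ker] at ha2 ⊢
        rw [map_mul, show (aeval sub2) (X 2 : MvPolynomial (Fin 6) ℂ) = X 2 by
          simp [sub2]] at ha2
        rcases mul_eq_zero.mp ha2 with h | h
        · exact h
        · exact absurd h (X_ne_zero 2)
      -- a = c * X5 + z with z ∈ span {X3, X0}
      rw [hI2] at ha
      rw [show ({X 5, X 3, X 0} : Set (MvPolynomial (Fin 6) ℂ)) =
        insert (X 5) {X 3, X 0} from rfl, Ideal.span_insert, Ideal.mem_span_singleton_sup] at ha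
      obtain ⟨c, z, hz, hcz⟩ := ha
      rw [Ideal.mem_span_pair] at hz
      obtain ⟨d, e, hde⟩ := hz
      have haI : a * X 2 ∈ I := by
        have h : a * X 2 = c * (X 2 * X 5) + d * (X 3 * X 2) + (e * X 2) * X 0 := by
          rw [← hcz, ← hde]; ring
        rw [h]
        refine I.add_mem (I.add_mem ?_ ?_) ?_
        · exact I.mul_mem_left _ hIg3
        · exact I.mul_mem_left _ hX3X2
        · have h2 : (e * X 2) * X 0 = e * (X 0 * X 2) := by ring
          rw [h2]; exact I.mul_mem_left _ hIg2
      have hbI : b * (X 0 * X 4 - X 3) ∈ I := I.mul_mem_left _ hIg1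
      rw [← hab]
      exact I.add_mem haI hbI
  refine ⟨?_, hP1, hP2, heq⟩
  exact heq ▸ (hP1.isRadical.inf hP2.isRadical)
end

section
/- Let W = S₄ with parabolic W_M = ⟨s₁, s₃⟩, and for v in the minimal coset representatives ᴹW define R(v) = right descent roots of v and O(v) = {τ ∈ ᴹW : τ ≠ v, τ = x_v·z for some z ∈ W_{L_v}, and R(τ) = R(z)} (where v = x_v·w₀(L_v) is the parabolic decomposition along the parabolic L_v generated by R(v)). Then the set ᴹW \ ⋃_{v ∈ ᴹW} O(v) equals {s₂s₃s₁s₂, s₂s₃s₁, s₂}. -/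
/-- The simple transpositions `s₁, s₂, s₃` of `S₄`, indexed by `Fin 3`. -/
def sgen (i : Fin 3) : Equiv.Perm (Fin 4) := Equiv.swap i.castSucc i.succ

/-- Coxeter length of a permutation: the number of inversions. -/
def plen (σ : Equiv.Perm (Fin 4)) : ℕ :=
  (Finset.univ.filter fun p : Fin 4 × Fin 4 => p.1 < p.2 ∧ σ p.2 < σ p.1).card

/-- Right descent set `R(v)` of `v` (as a set of indices of simple roots). -/
def Rset (v : Equiv.Perm (Fin 4)) : Set (Fin 3) := {i | plen (v * sgen i) < plen v}

/-- The parabolic subgroup `W_{L_v}` generated by the right descents of `v`. -/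
def WL (v : Equiv.Perm (Fin 4)) : Subgroup (Equiv.Perm (Fin 4)) :=
  Subgroup.closure (sgen '' Rset v)

/-- The set `ᴹW` of minimal-length representatives for `W_M\S₄`, `W_M = ⟨s₁,s₃⟩`:
elements with no left descent in `{s₁, s₃}`. -/
def MW : Set (Equiv.Perm (Fin 4)) :=
  {v | plen v < plen (sgen 0 * v) ∧ plen v < plen (sgen 2 * v)}

/-- `x` is the minimal-length element of the coset `v·W_{L_v}`. -/
def IsMinRep (x v : Equiv.Perm (Fin 4)) : Prop :=
  v⁻¹ * x ∈ WL v ∧ ∀ u : Equiv.Perm (Fin 4), v⁻¹ * u ∈ WL v → plen x ≤ plen u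

/-- `O(v) = {τ ∈ ᴹW : τ ≠ v, τ = x_v·z for some z ∈ W_{L_v}, R(τ) = R(z)}`. -/
def Oset (v : Equiv.Perm (Fin 4)) : Set (Equiv.Perm (Fin 4)) :=
  {τ | τ ∈ MW ∧ τ ≠ v ∧ ∃ x z : Equiv.Perm (Fin 4),
    IsMinRep x v ∧ z ∈ WL v ∧ τ = x * z ∧ Rset τ = Rset z}

/-! ### Auxiliary computable versions -/

/-- Computable right descent set. -/
def Rsetd (v : Equiv.Perm (Fin 4)) : Finset (Fin 3) :=
  Finset.univ.filter fun i => plen (v * sgen i) < plen v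

/-- Computable candidate for the parabolic `W_{L_v}` (valid for `v ∈ ᴹW`). -/
def WLfin (v : Equiv.Perm (Fin 4)) : Finset (Equiv.Perm (Fin 4)) :=
  Finset.image (fun p : Bool × Bool × Bool =>
    (if p.1 then sgen 0 else 1) * (if p.2.1 then sgen 1 else 1) * (if p.2.2 then sgen 2 else 1))
    (Finset.univ.filter fun p =>
      (p.1 → 0 ∈ Rsetd v) ∧ (p.2.1 → 1 ∈ Rsetd v) ∧ (p.2.2 → 2 ∈ Rsetd v))

def IsMinRep' (x v : Equiv.Perm (Fin 4)) : Prop :=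
  v⁻¹ * x ∈ WLfin v ∧ ∀ u : Equiv.Perm (Fin 4), v⁻¹ * u ∈ WLfin v → plen x ≤ plen u

instance (x v : Equiv.Perm (Fin 4)) : Decidable (IsMinRep' x v) := by
  unfold IsMinRep'; infer_instance

def MW' (v : Equiv.Perm (Fin 4)) : Prop :=
  plen v < plen (sgen 0 * v) ∧ plen v < plen (sgen 2 * v)

instance (v : Equiv.Perm (Fin 4)) : Decidable (MW' v) := by unfold MW'; infer_instance

def Oset' (v τ : Equiv.Perm (Fin 4)) : Prop :=
  MW' τ ∧ τ ≠ v ∧ ∃ x z : Equiv.Perm (Fin 4),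
    IsMinRep' x v ∧ z ∈ WLfin v ∧ τ = x * z ∧ Rsetd τ = Rsetd z

instance (v τ : Equiv.Perm (Fin 4)) : Decidable (Oset' v τ) := by unfold Oset'; infer_instance

/-! ### Bridge lemmas -/

lemma mem_MW_iff (v : Equiv.Perm (Fin 4)) : v ∈ MW ↔ MW' v := Iff.rfl

lemma mem_Rset_iff (v : Equiv.Perm (Fin 4)) (i : Fin 3) : i ∈ Rset v ↔ i ∈ Rsetd v := by
  simp [Rset, Rsetd]

lemma Rset_coe (v : Equiv.Perm (Fin 4)) : Rset v = ↑(Rsetd v) := by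
  ext i; simpa using mem_Rset_iff v i

lemma Rset_eq_iff (a b : Equiv.Perm (Fin 4)) : Rset a = Rset b ↔ Rsetd a = Rsetd b := by
  rw [Rset_coe, Rset_coe, Finset.coe_inj]

lemma img_eq (v : Equiv.Perm (Fin 4)) : sgen '' Rset v = ↑((Rsetd v).image sgen) := by
  rw [Rset_coe, Finset.coe_image]

/-- Generic recognition of a closure as an explicit finset. -/
lemma mem_closure_iff_finset {G : Type*} [Group G] [DecidableEq G]
    (S F : Finset G) (h1 : (1 : G) ∈ F)
    (hmul : ∀ x ∈ F, ∀ y ∈ F, x * y ∈ F) (hinv : ∀ x ∈ F, x⁻¹ ∈ F)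
    (hS : S ⊆ F) (hF : ∀ x ∈ F, x ∈ Subgroup.closure (S : Set G)) (x : G) :
    x ∈ Subgroup.closure (S : Set G) ↔ x ∈ F := by
  constructor
  · intro h
    induction h using Subgroup.closure_induction with
    | mem y hy => exact hS (Finset.mem_coe.mp hy)
    | one => exact h1
    | mul a b _ _ ha hb => exact hmul _ ha _ hb
    | inv a _ ha => exact hinv _ ha
  · exact hF x

lemma MW_six : ∀ v : Equiv.Perm (Fin 4), MW' v →
    v = 1 ∨ v = sgen 1 ∨ v = sgen 1 * sgen 0 ∨ v = sgen 1 * sgen 2 ∨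
    v = sgen 1 * sgen 2 * sgen 0 ∨ v = sgen 1 * sgen 2 * sgen 0 * sgen 1 := by decide

lemma WL_iff : ∀ v : Equiv.Perm (Fin 4), MW' v →
    ∀ x : Equiv.Perm (Fin 4), x ∈ WL v ↔ x ∈ WLfin v := by
  intro v hv
  have hWL : ∀ x, x ∈ WL v ↔ x ∈ Subgroup.closure ((((Rsetd v).image sgen) : Finset _) : Set _) := by
    intro x; rw [WL, img_eq]
  rcases MW_six v hv with h | h | h | h | h | h <;> subst h <;> intro x <;> rw [hWL x]
  · rw [mem_closure_iff_finset _ ({1} : Finset _) (by decide) (by decide) (by decide)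
      (by decide) ?_ x]
    · revert x; decide
    · intro y hy; fin_cases hy; exact one_mem _
  · rw [mem_closure_iff_finset _ ({1, sgen 1} : Finset _) (by decide) (by decide) (by decide)
      (by decide) ?_ x]
    · revert x; decide
    · intro y hy; fin_cases hy
      · exact one_mem _
      · exact Subgroup.subset_closure (Finset.mem_coe.mpr (by decide))
  · rw [mem_closure_iff_finset _ ({1, sgen 0} : Finset _) (by decide) (by decide) (by decide)
      (by decide) ?_ x]
    · revert x; decide
    · intro y hy; fin_cases hy
      · exact one_mem _
      · exact Subgroup.subset_closure (Finset.mem_coe.mpr (by decide))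
  · rw [mem_closure_iff_finset _ ({1, sgen 2} : Finset _) (by decide) (by decide) (by decide)
      (by decide) ?_ x]
    · revert x; decide
    · intro y hy; fin_cases hy
      · exact one_mem _
      · exact Subgroup.subset_closure (Finset.mem_coe.mpr (by decide))
  · rw [mem_closure_iff_finset _ ({1, sgen 0, sgen 2, sgen 0 * sgen 2} : Finset _)
      (by decide) (by decide) (by decide) (by decide) ?_ x]
    · revert x; decide
    · intro y hy; fin_cases hy
      · exact one_mem _
      · exact Subgroup.subset_closure (Finset.mem_coe.mpr (by decide))
      · exact Subgroup.subset_closure (Finset.mem_coe.mpr (by decide))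
      · exact mul_mem (Subgroup.subset_closure (Finset.mem_coe.mpr (by decide)))
          (Subgroup.subset_closure (Finset.mem_coe.mpr (by decide)))
  · rw [mem_closure_iff_finset _ ({1, sgen 1} : Finset _) (by decide) (by decide) (by decide)
      (by decide) ?_ x]
    · revert x; decide
    · intro y hy; fin_cases hy
      · exact one_mem _
      · exact Subgroup.subset_closure (Finset.mem_coe.mpr (by decide))

lemma IsMinRep_iff (x v : Equiv.Perm (Fin 4)) (hv : MW' v) :
    IsMinRep x v ↔ IsMinRep' x v := by
  unfold IsMinRep IsMinRep'
  constructor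
  · rintro ⟨h1, h2⟩
    exact ⟨(WL_iff v hv _).mp h1, fun u hu => h2 u ((WL_iff v hv _).mpr hu)⟩
  · rintro ⟨h1, h2⟩
    exact ⟨(WL_iff v hv _).mpr h1, fun u hu => h2 u ((WL_iff v hv _).mp hu)⟩

lemma Oset_iff (v τ : Equiv.Perm (Fin 4)) (hv : MW' v) : τ ∈ Oset v ↔ Oset' v τ := by
  unfold Oset Oset'
  simp only [Set.mem_setOf_eq, mem_MW_iff]
  refine and_congr Iff.rfl (and_congr Iff.rfl ?_)
  constructor
  · rintro ⟨x, z, h1, h2, h3, h4⟩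
    exact ⟨x, z, (IsMinRep_iff x v hv).mp h1, (WL_iff v hv _).mp h2, h3,
      (Rset_eq_iff _ _).mp h4⟩
  · rintro ⟨x, z, h1, h2, h3, h4⟩
    exact ⟨x, z, (IsMinRep_iff x v hv).mpr h1, (WL_iff v hv _).mpr h2, h3,
      (Rset_eq_iff _ _).mpr h4⟩

set_option maxHeartbeats 4000000 in
set_option maxRecDepth 100000 in
lemma main_decide : ∀ τ : Equiv.Perm (Fin 4),
    (MW' τ ∧ ¬ ∃ v, MW' v ∧ Oset' v τ) ↔
      (τ = sgen 1 * sgen 2 * sgen 0 * sgen 1 ∨ τ = sgen 1 * sgen 2 * sgen 0 ∨ τ = sgen 1) := by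
  decide

/-- `ᴹW \ ⋃_{v ∈ ᴹW} O(v) = {s₂s₃s₁s₂, s₂s₃s₁, s₂}`. -/
theorem stmt19 :
    MW \ {τ | ∃ v ∈ MW, τ ∈ Oset v} =
      {sgen 1 * sgen 2 * sgen 0 * sgen 1, sgen 1 * sgen 2 * sgen 0, sgen 1} := by
  ext τ
  simp only [Set.mem_diff, Set.mem_setOf_eq, Set.mem_insert_iff, Set.mem_singleton_iff,
    mem_MW_iff]
  rw [show (∃ v, MW' v ∧ τ ∈ Oset v) ↔ (∃ v, MW' v ∧ Oset' v τ) from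
    ⟨fun ⟨v, hv, h⟩ => ⟨v, hv, (Oset_iff v τ hv).mp h⟩,
     fun ⟨v, hv, h⟩ => ⟨v, hv, (Oset_iff v τ hv).mpr h⟩⟩]
  exact main_decide τ
end
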